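/- Let n ≥ 2 and 0 ≤ i ≤ n−1, and set D = ∂_w for w = s_{n−1}s_{n−2}···s_{i+1} (D is the identity when i = n−1). Then: (1) D maps the subring Z[X_1,…,X_n]^{S[i+2,n]} of polynomials symmetric in X_{i+2},…,X_n into the subring Z[X_1,…,X_n]^{S[i+1,n]} of polynomials symmetric in X_{i+1},…,X_n; (2) the powers X_{i+1}^0, X_{i+1}^1, …, X_{i+1}^{n−i−1} form a basis of Z[X_1,…,X_n]^{S[i+2,n]} as a module over Z[X_1,…,X_n]^{S[i+1,n]}; (3) for 0 ≤ j, m ≤ n−i−1 one has D( X_{i+1}^j · e_m(X_{i+2},…,X_n) ) = (−1)^j if j + m = n−i−1, and = 0 if j + m ≠ n−i−1; in particular the pairing (f,g) ↦ D(fg) on Z[X_1,…,X_n]^{S[i+2,n]} is a perfect Z[X_1,…,X_n]^{S[i+1,n]}-bilinear pairing, with {(−1)^j e_{n−i−1−j}(X_{i+2},…,X_n)}_{0≤j≤n−i−1} the basis dual to {X_{i+1}^j}_{0≤j≤n−i−1}. -/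

import Mathlib

open scoped BigOperators

namespace Dem

/-- The polynomial ring `ℤ[X_1, …, X_n]` (0-based variables). -/
abbrev R (n : ℕ) := MvPolynomial (Fin n) ℤ

/-- `D` is the family of Demazure (BGG) operators `∂_i` (0-based), characterized
by `(X_{i+1} - X_i) · ∂_i P = P - s_i(P)`. -/
def IsDemFamily {n : ℕ} (D : ℕ → R n → R n) : Prop :=
  ∀ (i : ℕ) (h : i + 1 < n) (P : R n),
    (MvPolynomial.X (⟨i + 1, h⟩ : Fin n) - MvPolynomial.X ⟨i, by omega⟩) * D i P
      = P - MvPolynomial.rename (Equiv.swap (⟨i, by omega⟩ : Fin n) ⟨i + 1, h⟩) P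

/-- `∂_w = ∂_{i_1} ∘ ⋯ ∘ ∂_{i_r}` for a word `l = [i_1, …, i_r]` (rightmost
applied first). -/
def applyWord {n : ℕ} (D : ℕ → R n → R n) (l : List ℕ) (P : R n) : R n :=
  l.foldr (fun i Q => D i Q) P

/-- The permutation of `Fin n` given by a word in the simple transpositions. -/
def permOfWord (n : ℕ) (l : List ℕ) : Equiv.Perm (Fin n) :=
  (l.map fun i =>
    if h : i + 1 < n then Equiv.swap (⟨i, by omega⟩ : Fin n) ⟨i + 1, h⟩ else 1).prod

/-- `l` is a reduced word for the permutation `w`. -/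
def IsReducedWordFor (n : ℕ) (l : List ℕ) (w : Equiv.Perm (Fin n)) : Prop :=
  (∀ i ∈ l, i + 1 < n) ∧ permOfWord n l = w ∧
    ∀ l' : List ℕ, (∀ i ∈ l', i + 1 < n) → permOfWord n l' = w → l.length ≤ l'.length

/-- The standard reduced word for the longest element of `S_m` (0-based). -/
def longWord (m : ℕ) : List ℕ :=
  (List.range m).foldr (fun j acc => (List.range j).reverse ++ acc) []

/-- The set of variables `X_{lo+1}, …, X_n` (0-based indices `≥ lo`). -/
def varsFrom (n lo : ℕ) : Finset (Fin n) :=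
  Finset.univ.filter fun a : Fin n => lo ≤ a.val

/-- The set of variables `X_1, …, X_m` (0-based indices `< m`). -/
def varsUpto (n m : ℕ) : Finset (Fin n) :=
  Finset.univ.filter fun a : Fin n => a.val < m

/-- Elementary symmetric polynomial of degree `m` in the variables of `s`. -/
noncomputable def eOn {n : ℕ} (s : Finset (Fin n)) (m : ℕ) : R n :=
  ∑ T ∈ s.powersetCard m, ∏ a ∈ T, MvPolynomial.X a

/-- Complete homogeneous symmetric polynomial of degree `j` in the variables of
`s`. -/
noncomputable def hOn {n : ℕ} (s : Finset (Fin n)) (j : ℕ) : R n :=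
  ∑ d ∈ s.sym j, (Multiset.map MvPolynomial.X (d : Multiset (Fin n))).prod

/-- `P` is symmetric in the variables with (0-based) index `≥ lo`. -/
def SymFrom {n : ℕ} (lo : ℕ) (P : R n) : Prop :=
  ∀ a b : Fin n, lo ≤ a.val → lo ≤ b.val →
    MvPolynomial.rename (Equiv.swap a b) P = P

/-- The monomial symmetric polynomial in the first `c` of the `n` variables,
attached to the exponent vector `w` (the sum of the distinct monomials in the
`S_c`-orbit of `X_1^{w_1} ⋯ X_c^{w_c}`). -/
noncomputable def msymBlock {n : ℕ} (c : ℕ) (w : Fin c → ℕ) : R n :=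
  ∑ g ∈ Finset.image
      (fun σ : Equiv.Perm (Fin c) =>
        fun i : Fin n => if h : i.val < c then w (σ ⟨i.val, h⟩) else 0)
      Finset.univ,
    ∏ i, MvPolynomial.X i ^ g i

end Dem

/-!
Write `A_k` for the polynomials symmetric in the variables of (0-based) index `≥ k`. The
variable `X_k` is a root of `∏_{b ≥ k} (T - X_b)`, a monic polynomial of degree `n - k` over
`A_k`, so the powers `X_k^j`, `j < n - k`, span `A_k[X_k]`; they are independent because the
swaps `(k b)` turn one relation into a Vandermonde system in the `X_b`. By descending induction
on `k` the same two facts give the relative fundamental theorem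
`A_k = ℤ[X_a (a < k), e_m(X_b : b ≥ k)]`, hence `A_{k+1} ⊆ A_k[X_k]`: the basis statement.

For the Demazure operator, `∂_w = ∂_{w'} ∘ ∂_k` with `w'` the word for `k + 1`, and `∂_w` is
`A_k`-linear. The twisted Leibniz rule gives
`∂_w (X_k^j e_{m+1}) = e_{m+1} ∂_w (X_k^j) + ∂_{w'} (X_{k+1}^j e'_m)`, where `e` is taken over
`b ≥ k + 1` and `e'` over `b ≥ k + 2`, so the values on `X_k^j e_m` follow by induction on
`n - k`; the one exponent `j = n - k` that the induction leaves over is reduced to smaller ones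
by the monic relation above. The first claim then follows from the basis statement and the
values at `m = 0`.
-/

namespace Dem

open MvPolynomial Finset

variable {n : ℕ}

section ElementarySymmetric

variable {s : Finset (Fin n)} {x : Fin n}

theorem eOn_eq_esymm (s : Finset (Fin n)) (m : ℕ) : eOn s m = (s.val.map X).esymm m :=
  (s.esymm_map_val X m).symm

@[simp] theorem eOn_zero (s : Finset (Fin n)) : eOn s 0 = 1 := by
  simp [eOn]

theorem eOn_eq_zero_of_card_lt {m : ℕ} (h : #s < m) : eOn s m = 0 := by
  rw [eOn, powersetCard_eq_empty.2 h, sum_empty]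

theorem eOn_insert_succ (hx : x ∉ s) (m : ℕ) :
    eOn (insert x s) (m + 1) = eOn s (m + 1) + X x * eOn s m := by
  simp only [eOn_eq_esymm, insert_val_of_notMem hx, Multiset.map_cons, Multiset.esymm,
    Multiset.powersetCard_cons, Multiset.map_add, Multiset.sum_add, Multiset.map_map,
    Function.comp_def, Multiset.prod_cons, Multiset.sum_map_mul_left]

theorem rename_eOn (σ : Equiv.Perm (Fin n)) (s : Finset (Fin n)) (m : ℕ) :
    rename σ (eOn s m) = eOn (s.map σ.toEmbedding) m := by
  simp [eOn, powersetCard_map, map_sum, map_prod]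

theorem rename_swap_eOn_of_notMem {a b : Fin n} (ha : a ∉ s) (hb : b ∉ s) (m : ℕ) :
    rename (Equiv.swap a b) (eOn s m) = eOn s m := by
  rw [rename_eOn]
  congr 1
  ext c
  rw [mem_map_equiv, Equiv.symm_swap]
  rcases eq_or_ne c a with rfl | hca
  · simp [ha, hb]
  rcases eq_or_ne c b with rfl | hcb
  · simp [ha, hb]
  rw [Equiv.swap_apply_of_ne_of_ne hca hcb]

theorem prod_sub_X_eq_sum_eOn (s : Finset (Fin n)) (Y : R n) :
    ∏ a ∈ s, (Y - X a) = ∑ v ∈ range (#s + 1), (-1) ^ v * (eOn s v * Y ^ (#s - v)) := by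
  have h := congrArg (Polynomial.eval Y) (Multiset.prod_X_sub_X_eq_sum_esymm (s.val.map X))
  simpa [Polynomial.eval_prod, Polynomial.eval_finsetSum, eOn_eq_esymm] using h

end ElementarySymmetric

section Symmetric

theorem mem_varsFrom {k : ℕ} {a : Fin n} : a ∈ varsFrom n k ↔ k ≤ a.val := by
  simp [varsFrom]

theorem varsFrom_eq_insert {k : ℕ} (hk : k < n) :
    varsFrom n k = insert ⟨k, hk⟩ (varsFrom n (k + 1)) := by
  ext a
  simp only [mem_varsFrom, mem_insert, Fin.ext_iff]
  omega

theorem card_varsFrom (k : ℕ) : #(varsFrom n k) = n - k := by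
  have : varsFrom n k = (Ico k n).attachFin (fun _ h => (mem_Ico.1 h).2) := by
    ext a; simp [mem_varsFrom, a.isLt]
  rw [this, card_attachFin, Nat.card_Ico]

/-- The ring `ℤ[X_1, …, X_n]^{S[k+1, n]}` (0-based `k`). -/
def symSubring (n k : ℕ) : Subring (R n) where
  carrier := {P | SymFrom k P}
  mul_mem' hP hQ a b ha hb := by rw [map_mul, hP a b ha hb, hQ a b ha hb]
  one_mem' _ _ _ _ := map_one _
  add_mem' hP hQ a b ha hb := by rw [map_add, hP a b ha hb, hQ a b ha hb]
  zero_mem' _ _ _ _ := map_zero _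
  neg_mem' hP a b ha hb := by rw [map_neg, hP a b ha hb]

variable {k : ℕ}

theorem symSubring_le_succ : symSubring n k ≤ symSubring n (k + 1) :=
  fun _ hP a b ha hb => hP a b (by omega) (by omega)

theorem X_mem_symSubring {a : Fin n} (h : a.val < k) : X a ∈ symSubring n k := by
  intro b c hb hc
  rw [rename_X, Equiv.swap_apply_of_ne_of_ne] <;> rintro rfl <;> omega

theorem eOn_varsFrom_mem_symSubring {k' : ℕ} (h : k' ≤ k) (m : ℕ) :
    eOn (varsFrom n k') m ∈ symSubring n k := by
  intro a b ha hb
  rw [rename_eOn]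
  congr 1
  ext c
  simp only [mem_map_equiv, Equiv.symm_swap, mem_varsFrom, Equiv.swap_apply_def]
  split_ifs <;> omega

theorem rename_swap_sum_mul_X_pow (hk : k < n) {N : ℕ} {c : Fin N → R n}
    (hc : ∀ j, c j ∈ symSubring n k) {b : Fin n} (hb : k ≤ b.val) :
    rename (Equiv.swap ⟨k, hk⟩ b) (∑ j, c j * X ⟨k, hk⟩ ^ (j : ℕ)) =
      ∑ j, c j * X b ^ (j : ℕ) := by
  simp only [map_sum, map_mul, map_pow, rename_X, Equiv.swap_apply_left,
    hc _ ⟨k, hk⟩ b le_rfl hb]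

theorem eq_zero_of_sum_mul_X_pow_eq_zero (hk : k < n) {c : Fin (n - k) → R n}
    (hc : ∀ j, c j ∈ symSubring n k) (h : ∑ j, c j * X ⟨k, hk⟩ ^ (j : ℕ) = 0) :
    c = 0 := by
  refine Matrix.eq_zero_of_forall_index_sum_mul_pow_eq_zero
    (f := fun l : Fin (n - k) => X ⟨k + l, by omega⟩) ?_ fun l => ?_
  · intro l l' hl
    simpa [Fin.ext_iff] using X_injective hl
  · rw [← rename_swap_sum_mul_X_pow hk hc (Nat.le_add_right k l), h, map_zero]

end Symmetric

section FundamentalTheorem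

noncomputable def elemClosure (n k : ℕ) : Subring (R n) :=
  Subring.closure (X '' {a | a.val < k} ∪ Set.range (eOn (varsFrom n k)))

variable {k : ℕ}

theorem X_mem_elemClosure {a : Fin n} (h : a.val < k) : X a ∈ elemClosure n k :=
  Subring.subset_closure (Or.inl ⟨a, h, rfl⟩)

theorem eOn_mem_elemClosure (m : ℕ) : eOn (varsFrom n k) m ∈ elemClosure n k :=
  Subring.subset_closure (Or.inr ⟨m, rfl⟩)

theorem elemClosure_le_symSubring : elemClosure n k ≤ symSubring n k := by
  refine Subring.closure_le.2 (Set.union_subset ?_ ?_)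
  · rintro _ ⟨a, ha, rfl⟩
    exact X_mem_symSubring ha
  · rintro _ ⟨m, rfl⟩
    exact eOn_varsFrom_mem_symSubring le_rfl m

theorem elemClosure_self : elemClosure n n = ⊤ := by
  refine (Subring.eq_top_iff' _).2 fun P => ?_
  induction P using MvPolynomial.induction_on with
  | C a => exact (eq_intCast C a).symm ▸ intCast_mem _ a
  | add p q hp hq => exact add_mem hp hq
  | mul_X p a hp => exact mul_mem hp (X_mem_elemClosure a.isLt)

noncomputable def powerSpan (hk : k < n) : Submodule (elemClosure n k) (R n) :=
  Submodule.span (elemClosure n k) (Set.range fun j : Fin (n - k) => X ⟨k, hk⟩ ^ (j : ℕ))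

theorem mul_mem_powerSpan {hk : k < n} {c y : R n} (hc : c ∈ elemClosure n k)
    (hy : y ∈ powerSpan hk) : c * y ∈ powerSpan hk :=
  (powerSpan hk).smul_mem ⟨c, hc⟩ hy

theorem X_pow_mem_powerSpan {hk : k < n} {j : ℕ} (hj : j < n - k) :
    X ⟨k, hk⟩ ^ j ∈ powerSpan hk :=
  Submodule.subset_span ⟨⟨j, hj⟩, rfl⟩

/-- `X_k` is a root of `∏_{b ≥ k} (T - X_b)`, whose coefficients are `± e_v(X_b : b ≥ k)`. -/
theorem X_pow_succ_eq_neg_sum_eOn {t : ℕ} (hkt : k + t + 1 = n) :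
    X ⟨k, by omega⟩ ^ (t + 1) = -∑ v ∈ range (t + 1),
      (-1) ^ (v + 1) * (eOn (varsFrom n k) (v + 1) * X ⟨k, by omega⟩ ^ (t - v)) := by
  have hvieta := prod_sub_X_eq_sum_eOn (varsFrom n k) (X ⟨k, by omega⟩)
  rw [prod_eq_zero (i := ⟨k, by omega⟩) (mem_varsFrom.2 le_rfl) (sub_self _), card_varsFrom,
    show n - k = t + 1 by omega, sum_range_succ'] at hvieta
  simp only [Nat.add_sub_add_right, pow_zero, eOn_zero, one_mul, Nat.sub_zero] at hvieta
  linear_combination -hvieta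

theorem X_mul_mem_powerSpan (hk : k < n) {y : R n} (hy : y ∈ powerSpan hk) :
    X ⟨k, hk⟩ * y ∈ powerSpan hk := by
  induction hy using Submodule.span_induction with
  | mem _ hy =>
    obtain ⟨j, rfl⟩ := hy
    rw [← pow_succ']
    rcases Nat.lt_or_ge (j + 1) (n - k) with hj | hj
    · exact X_pow_mem_powerSpan hj
    · rw [show (j : ℕ) + 1 = (n - k - 1) + 1 by omega, X_pow_succ_eq_neg_sum_eOn (by omega)]
      exact neg_mem (sum_mem fun v _ => mul_mem_powerSpan (pow_mem (neg_mem (one_mem _)) _)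
        (mul_mem_powerSpan (eOn_mem_elemClosure _) (X_pow_mem_powerSpan (by omega))))
  | zero => simp
  | add _ _ _ _ hx hy => rw [mul_add]; exact add_mem hx hy
  | smul c _ _ hx => rw [mul_smul_comm]; exact (powerSpan hk).smul_mem c hx

def mulStabilizer {A : Type*} [Ring A] (M : AddSubgroup A) : Subring A where
  carrier := {x | ∀ y ∈ M, x * y ∈ M}
  mul_mem' hx hy z hz := by rw [mul_assoc]; exact hx _ (hy z hz)
  one_mem' y hy := by rwa [one_mul]
  add_mem' hx hy z hz := by rw [add_mul]; exact add_mem (hx z hz) (hy z hz)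
  zero_mem' y _ := by rw [zero_mul]; exact zero_mem M
  neg_mem' hx y hy := by rw [neg_mul]; exact neg_mem (hx y hy)

theorem elemClosure_succ_le_mulStabilizer (hk : k < n) :
    elemClosure n (k + 1) ≤ mulStabilizer (powerSpan hk).toAddSubgroup := by
  have hX : X ⟨k, hk⟩ ∈ mulStabilizer (powerSpan hk).toAddSubgroup :=
    fun _ => X_mul_mem_powerSpan hk
  have hB : ∀ c ∈ elemClosure n k, c ∈ mulStabilizer (powerSpan hk).toAddSubgroup :=
    fun _ hc _ => mul_mem_powerSpan hc
  refine Subring.closure_le.2 (Set.union_subset ?_ ?_)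
  · rintro _ ⟨a, ha, rfl⟩
    have ha : a.val < k + 1 := ha
    rcases Nat.lt_or_ge a.val k with h | h
    · exact hB _ (X_mem_elemClosure h)
    · obtain rfl : a = ⟨k, hk⟩ := Fin.ext (by simp; omega)
      exact hX
  · rintro _ ⟨m, rfl⟩
    induction m with
    | zero => simp [one_mem]
    | succ m ih =>
      have h : eOn (varsFrom n k) (m + 1) =
          eOn (varsFrom n (k + 1)) (m + 1) + X ⟨k, hk⟩ * eOn (varsFrom n (k + 1)) m := by
        rw [varsFrom_eq_insert hk, eOn_insert_succ (by simp [mem_varsFrom])]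
      rw [eq_sub_of_add_eq h.symm]
      exact sub_mem (hB _ (eOn_mem_elemClosure _)) (mul_mem hX ih)

theorem exists_sum_mul_X_pow_of_mem_elemClosure_succ (hk : k < n) {P : R n}
    (hP : P ∈ elemClosure n (k + 1)) :
    ∃ c : Fin (n - k) → R n, (∀ j, c j ∈ elemClosure n k) ∧
      ∑ j, c j * X ⟨k, hk⟩ ^ (j : ℕ) = P := by
  have h1 : (1 : R n) ∈ powerSpan hk := by
    simpa using X_pow_mem_powerSpan (hk := hk) (j := 0) (by omega)
  have h := elemClosure_succ_le_mulStabilizer hk hP 1 h1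
  rw [mul_one] at h
  obtain ⟨c, hc⟩ := Submodule.mem_span_range_iff_exists_fun _ |>.1 h
  exact ⟨fun j => c j, fun j => (c j).2, hc⟩

theorem symSubring_le_elemClosure (hk : k ≤ n) : symSubring n k ≤ elemClosure n k := by
  induction hk using Nat.decreasingInduction with
  | self => exact elemClosure_self ▸ le_top
  | of_succ k hk ih =>
    intro P hP
    obtain ⟨c, hc, hsum⟩ :=
      exists_sum_mul_X_pow_of_mem_elemClosure_succ hk (ih (symSubring_le_succ hP))
    have hc0 : (0 : ℕ) < n - k := by omega
    -- `∑ c_j X_k^j - P = 0` is a relation with coefficients in `symSubring n k`, so `c_0 = P`.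
    have := eq_zero_of_sum_mul_X_pow_eq_zero hk
      (c := fun j => c j - if j = ⟨0, hc0⟩ then P else 0)
      (fun j => sub_mem (elemClosure_le_symSubring (hc j)) (by split_ifs <;> simp [hP, zero_mem]))
      (by simp [sub_mul, sum_sub_distrib, hsum])
    have h0 := congrFun this ⟨0, hc0⟩
    simp only [Pi.zero_apply, sub_eq_zero, if_true] at h0
    exact h0 ▸ hc _

theorem exists_sum_mul_X_pow (hk : k < n) {P : R n} (hP : P ∈ symSubring n (k + 1)) :
    ∃ c : Fin (n - k) → R n, (∀ j, c j ∈ symSubring n k) ∧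
      P = ∑ j, c j * X ⟨k, hk⟩ ^ (j : ℕ) := by
  obtain ⟨c, hc, hsum⟩ :=
    exists_sum_mul_X_pow_of_mem_elemClosure_succ hk (symSubring_le_elemClosure hk hP)
  exact ⟨c, fun j => elemClosure_le_symSubring (hc j), hsum.symm⟩

end FundamentalTheorem

section Demazure

variable {D : ℕ → R n → R n} (hD : IsDemFamily D) {l : ℕ} (hl : l + 1 < n)
include hD hl

theorem demazure_eq_of_mul_eq {P Q : R n}
    (h : (X ⟨l + 1, hl⟩ - X ⟨l, by omega⟩) * Q =
      P - rename (Equiv.swap (⟨l, by omega⟩ : Fin n) ⟨l + 1, hl⟩) P) :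
    D l P = Q := by
  refine mul_left_cancel₀ (sub_ne_zero.2 fun h' => ?_) ((hD l hl P).trans h.symm)
  simpa [Fin.ext_iff] using X_injective h'

theorem demazure_add (P Q : R n) : D l (P + Q) = D l P + D l Q :=
  demazure_eq_of_mul_eq hD hl (by rw [mul_add, hD l hl P, hD l hl Q, map_add]; ring)

theorem demazure_mul (P Q : R n) :
    D l (P * Q) = D l P * Q +
      rename (Equiv.swap (⟨l, by omega⟩ : Fin n) ⟨l + 1, hl⟩) P * D l Q := by
  refine demazure_eq_of_mul_eq hD hl ?_
  rw [map_mul]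
  linear_combination Q * hD l hl P +
    rename (Equiv.swap (⟨l, by omega⟩ : Fin n) ⟨l + 1, hl⟩) P * hD l hl Q

theorem demazure_eq_zero_of_rename_swap_eq {U : R n}
    (hU : rename (Equiv.swap (⟨l, by omega⟩ : Fin n) ⟨l + 1, hl⟩) U = U) : D l U = 0 :=
  demazure_eq_of_mul_eq hD hl (by rw [hU, sub_self, mul_zero])

theorem demazure_mul_of_rename_swap_eq {U : R n}
    (hU : rename (Equiv.swap (⟨l, by omega⟩ : Fin n) ⟨l + 1, hl⟩) U = U) (P : R n) :
    D l (U * P) = U * D l P := by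
  rw [demazure_mul hD hl, demazure_eq_zero_of_rename_swap_eq hD hl hU, hU, zero_mul, zero_add]

theorem demazure_X_pow (j : ℕ) :
    D l (X ⟨l, by omega⟩ ^ j) =
      -∑ a ∈ range j, X ⟨l, by omega⟩ ^ a * X ⟨l + 1, hl⟩ ^ (j - 1 - a) := by
  refine demazure_eq_of_mul_eq hD hl ?_
  rw [map_pow, rename_X, Equiv.swap_apply_left]
  linear_combination geom_sum₂_mul (X (⟨l, by omega⟩ : Fin n) : R n) (X ⟨l + 1, hl⟩) j

theorem demazure_eOn_insert_succ {s : Finset (Fin n)} (h₀ : ⟨l, by omega⟩ ∉ s)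
    (h₁ : ⟨l + 1, hl⟩ ∉ s) (m : ℕ) :
    D l (eOn (insert ⟨l + 1, hl⟩ s) (m + 1)) = eOn s m := by
  refine demazure_eq_of_mul_eq hD hl ?_
  rw [eOn_insert_succ h₁, map_add, map_mul, rename_X, Equiv.swap_apply_right,
    rename_swap_eOn_of_notMem h₀ h₁, rename_swap_eOn_of_notMem h₀ h₁]
  ring

end Demazure

section Word

variable {D : ℕ → R n → R n} (hD : IsDemFamily D)

/-- The word `[n-2, n-3, …, k]`, i.e. `s_{n-1} ⋯ s_{k+1}` in 1-based notation. -/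
def demazureWord (n k : ℕ) : List ℕ := (List.range (n - 1 - k)).reverse.map (· + k)

theorem demazureWord_of_le {k : ℕ} (h : n ≤ k + 1) : demazureWord n k = [] := by
  simp [demazureWord, show n - 1 - k = 0 by omega]

theorem demazureWord_eq_append {k : ℕ} (hk : k + 1 < n) :
    demazureWord n k = demazureWord n (k + 1) ++ [k] := by
  rw [demazureWord, show n - 1 - k = (n - 1 - (k + 1)) + 1 by omega, List.range_succ_eq_map]
  simp +arith [demazureWord]

theorem mem_demazureWord {k l : ℕ} (h : l ∈ demazureWord n k) : k ≤ l ∧ l + 1 < n := by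
  simp only [demazureWord, List.mem_map, List.mem_reverse, List.mem_range] at h
  omega

theorem applyWord_demazureWord_succ {k : ℕ} (hk : k + 1 < n) (P : R n) :
    applyWord D (demazureWord n k) P = applyWord D (demazureWord n (k + 1)) (D k P) := by
  rw [demazureWord_eq_append hk, applyWord, List.foldr_append]
  rfl

include hD

theorem applyWord_add {w : List ℕ} (hw : ∀ l ∈ w, l + 1 < n) (P Q : R n) :
    applyWord D w (P + Q) = applyWord D w P + applyWord D w Q := by
  induction w with
  | nil => rfl
  | cons l w ih =>
    simp only [List.mem_cons, forall_eq_or_imp] at hw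
    exact (congrArg (D l) (ih hw.2)).trans (demazure_add hD hw.1 _ _)

theorem applyWord_neg {w : List ℕ} (hw : ∀ l ∈ w, l + 1 < n) (P : R n) :
    applyWord D w (-P) = -applyWord D w P :=
  map_neg (AddMonoidHom.mk' (applyWord D w) (applyWord_add hD hw)) P

theorem applyWord_sum {w : List ℕ} (hw : ∀ l ∈ w, l + 1 < n) {ι : Type*} (s : Finset ι)
    (f : ι → R n) : applyWord D w (∑ a ∈ s, f a) = ∑ a ∈ s, applyWord D w (f a) :=
  map_sum (AddMonoidHom.mk' (applyWord D w) (applyWord_add hD hw)) f s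

theorem applyWord_mul_left {w : List ℕ} {U : R n}
    (hU : ∀ l ∈ w, ∃ hl : l + 1 < n,
      rename (Equiv.swap (⟨l, by omega⟩ : Fin n) ⟨l + 1, hl⟩) U = U) (P : R n) :
    applyWord D w (U * P) = U * applyWord D w P := by
  induction w with
  | nil => rfl
  | cons l w ih =>
    simp only [List.mem_cons, forall_eq_or_imp] at hU
    obtain ⟨⟨hl, hUl⟩, hU⟩ := hU
    exact (congrArg (D l) (ih hU)).trans (demazure_mul_of_rename_swap_eq hD hl hUl _)

theorem applyWord_demazureWord_mul {k : ℕ} {U : R n} (hU : U ∈ symSubring n k) (P : R n) :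
    applyWord D (demazureWord n k) (U * P) = U * applyWord D (demazureWord n k) P :=
  applyWord_mul_left hD (fun _ hl => ⟨(mem_demazureWord hl).2,
    hU _ _ (mem_demazureWord hl).1 (Nat.le_succ_of_le (mem_demazureWord hl).1)⟩) P

end Word

section Computation

variable {D : ℕ → R n → R n} (hD : IsDemFamily D) {k : ℕ}
include hD

theorem applyWord_demazureWord_X_pow_eq_neg_sum (hk : k + 1 < n) (j : ℕ) :
    applyWord D (demazureWord n k) (X ⟨k, by omega⟩ ^ j) =
      -∑ a ∈ range j, X ⟨k, by omega⟩ ^ a *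
        applyWord D (demazureWord n (k + 1)) (X ⟨k + 1, hk⟩ ^ (j - 1 - a)) := by
  have hw : ∀ l ∈ demazureWord n (k + 1), l + 1 < n := fun l hl => (mem_demazureWord hl).2
  rw [applyWord_demazureWord_succ hk, demazure_X_pow hD hk, applyWord_neg hD hw,
    applyWord_sum hD hw]
  congr 1
  exact sum_congr rfl fun a _ =>
    applyWord_demazureWord_mul hD (pow_mem (X_mem_symSubring (by simp)) a) _

theorem applyWord_demazureWord_X_pow_mul_eOn_succ (hk : k + 1 < n) (j m : ℕ) :
    applyWord D (demazureWord n k) (X ⟨k, by omega⟩ ^ j * eOn (varsFrom n (k + 1)) (m + 1)) =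
      eOn (varsFrom n (k + 1)) (m + 1) * applyWord D (demazureWord n k) (X ⟨k, by omega⟩ ^ j) +
        applyWord D (demazureWord n (k + 1))
          (X ⟨k + 1, hk⟩ ^ j * eOn (varsFrom n (k + 1 + 1)) m) := by
  have he : D k (eOn (varsFrom n (k + 1)) (m + 1)) = eOn (varsFrom n (k + 1 + 1)) m := by
    rw [varsFrom_eq_insert hk]
    exact demazure_eOn_insert_succ hD hk (by simp [mem_varsFrom]) (by simp [mem_varsFrom]) m
  rw [applyWord_demazureWord_succ hk, applyWord_demazureWord_succ hk, demazure_mul hD hk, he,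
    map_pow, rename_X, Equiv.swap_apply_left,
    applyWord_add hD fun l hl => (mem_demazureWord hl).2, mul_comm (D k _),
    applyWord_demazureWord_mul hD (eOn_varsFrom_mem_symSubring le_rfl _)]

/-- Once `∂_w` is known on `X_k^j e_m` for `j ≤ t`, the relation `∏_{b ≥ k} (X_k - X_b) = 0`
gives it on `X_k^{t+1} e_m`. -/
theorem applyWord_demazureWord_X_pow_succ_mul_eOn {t : ℕ} (hkt : k + t + 1 = n)
    (h : ∀ j ≤ t, ∀ m, applyWord D (demazureWord n k)
      (X ⟨k, by omega⟩ ^ j * eOn (varsFrom n (k + 1)) m) = if j + m = t then (-1) ^ j else 0)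
    (m : ℕ) :
    applyWord D (demazureWord n k) (X ⟨k, by omega⟩ ^ (t + 1) * eOn (varsFrom n (k + 1)) m) =
      (-1) ^ t * eOn (varsFrom n k) (m + 1) := by
  have hw : ∀ l ∈ demazureWord n k, l + 1 < n := fun l hl => (mem_demazureWord hl).2
  rw [X_pow_succ_eq_neg_sum_eOn hkt, neg_mul, sum_mul, applyWord_neg hD hw, applyWord_sum hD hw]
  have hterm : ∀ v ∈ range (t + 1), applyWord D (demazureWord n k)
      ((-1) ^ (v + 1) * (eOn (varsFrom n k) (v + 1) * X ⟨k, by omega⟩ ^ (t - v)) *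
        eOn (varsFrom n (k + 1)) m) =
      if v = m then (-1) ^ (t + 1) * eOn (varsFrom n k) (m + 1) else 0 := by
    intro v hv
    have hv : v ≤ t := Nat.lt_succ_iff.1 (mem_range.1 hv)
    rw [show ∀ a b c d : R n, a * (b * c) * d = (a * b) * (c * d) by intros; ring,
      applyWord_demazureWord_mul hD (mul_mem (pow_mem (neg_mem (one_mem _)) _)
        (eOn_varsFrom_mem_symSubring le_rfl _)), h (t - v) (by omega)]
    rcases eq_or_ne v m with rfl | hvm
    · rw [if_pos (by omega), if_pos rfl, mul_right_comm, ← pow_add,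
        show v + 1 + (t - v) = t + 1 by omega]
    · rw [if_neg (by omega), if_neg hvm, mul_zero]
  rw [sum_congr rfl hterm, sum_ite_eq']
  split_ifs with hm
  · ring
  · rw [eOn_eq_zero_of_card_lt (by rw [card_varsFrom]; simp at hm; omega), mul_zero, neg_zero]

theorem applyWord_demazureWord_X_pow (t : ℕ) {k : ℕ} (hkt : k + t + 1 = n) {j : ℕ}
    (hj : j ≤ t) :
    applyWord D (demazureWord n k) (X ⟨k, by omega⟩ ^ j) = if j = t then (-1) ^ t else 0 := by
  induction t generalizing k j with
  | zero =>
    obtain rfl : j = 0 := by omega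
    rw [demazureWord_of_le (by omega)]
    simp [applyWord]
  | succ t ih =>
    have hk : k + 1 < n := by omega
    have hvanish : ∀ a, j - 1 - a ≠ t → X ⟨k, by omega⟩ ^ a *
        applyWord D (demazureWord n (k + 1)) (X ⟨k + 1, hk⟩ ^ (j - 1 - a)) = 0 := fun a ha => by
      rw [ih (by omega) (by omega), if_neg ha, mul_zero]
    rw [applyWord_demazureWord_X_pow_eq_neg_sum hD hk]
    rcases Nat.lt_or_ge j (t + 1) with hjt | hjt
    · rw [sum_eq_zero fun a ha => hvanish a (by simp at ha; omega), if_neg (by omega), neg_zero]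
    · obtain rfl : j = t + 1 := by omega
      rw [sum_range_succ', sum_eq_zero fun a ha => hvanish (a + 1) (by simp at ha; omega),
        show t + 1 - 1 - 0 = t by omega, ih (by omega) le_rfl, if_pos rfl, if_pos rfl]
      simp [pow_succ]

theorem applyWord_demazureWord_X_pow_mul_eOn (t : ℕ) {k : ℕ} (hkt : k + t + 1 = n) {j : ℕ}
    (hj : j ≤ t) (m : ℕ) :
    applyWord D (demazureWord n k) (X ⟨k, by omega⟩ ^ j * eOn (varsFrom n (k + 1)) m) =
      if j + m = t then (-1) ^ j else 0 := by
  induction t generalizing k j m with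
  | zero =>
    obtain rfl : j = 0 := by omega
    rw [demazureWord_of_le (by omega)]
    cases m with
    | zero => simp [applyWord]
    | succ m =>
      rw [eOn_eq_zero_of_card_lt (s := varsFrom n (k + 1)) (m := m + 1)
        (by rw [card_varsFrom]; omega)]
      simp [applyWord]
  | succ t ih =>
    have hk : k + 1 < n := by omega
    have ih' := @ih (k + 1) (by omega)
    cases m with
    | zero =>
      rw [eOn_zero, mul_one, applyWord_demazureWord_X_pow hD (t + 1) hkt hj]
      rcases eq_or_ne j (t + 1) with rfl | h <;> simp [*]
    | succ m =>
      rw [applyWord_demazureWord_X_pow_mul_eOn_succ hD hk,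
        applyWord_demazureWord_X_pow hD (t + 1) hkt hj]
      rcases Nat.lt_or_ge j (t + 1) with hjt | hjt
      · rw [if_neg (by omega), mul_zero, zero_add, ih' (by omega : j ≤ t) m]
        split_ifs <;> first | rfl | omega
      · obtain rfl : j = t + 1 := by omega
        rw [if_pos rfl, applyWord_demazureWord_X_pow_succ_mul_eOn hD (by omega)
          (fun j hj m => ih' hj m) m, if_neg (by omega)]
        ring

theorem applyWord_demazureWord_mem_symSubring (hk : k < n) {P : R n}
    (hP : P ∈ symSubring n (k + 1)) : applyWord D (demazureWord n k) P ∈ symSubring n k := by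
  obtain ⟨c, hc, rfl⟩ := exists_sum_mul_X_pow hk hP
  rw [applyWord_sum hD fun l hl => (mem_demazureWord hl).2]
  refine sum_mem fun j _ => ?_
  rw [applyWord_demazureWord_mul hD (hc j),
    applyWord_demazureWord_X_pow hD (n - k - 1) (by omega) (by omega)]
  exact mul_mem (hc j) (by split_ifs; exacts [pow_mem (neg_mem (one_mem _)) _, zero_mem _])

end Computation

end Dem

open Dem in
/-- Let `D = ∂_{s_{n-1} ⋯ s_{i+1}}` (paper 1-based indexing;
`0 ≤ i ≤ n-1`, `D = id` for `i = n-1`). Then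
(1) `D` maps polynomials symmetric in `X_{i+2},…,X_n` to polynomials symmetric
in `X_{i+1},…,X_n`;
(2) the powers `X_{i+1}^0, …, X_{i+1}^{n-i-1}` form a basis of the former ring
over the latter;
(3) `D(X_{i+1}^j · e_m(X_{i+2},…,X_n)) = (-1)^j` if `j + m = n-i-1` and `= 0`
otherwise (for `0 ≤ j, m ≤ n-i-1`). -/
theorem statement8 (n : ℕ) (i : ℕ) (hi : i + 1 ≤ n)
    (D : ℕ → R n → R n) (hD : IsDemFamily D) :
    (∀ P : R n, SymFrom (i + 1) P →
      SymFrom i (applyWord D ((List.range (n - 1 - i)).reverse.map (· + i)) P)) ∧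
    (∀ P : R n, SymFrom (i + 1) P →
      ∃ c : Fin (n - i) → R n, (∀ j, SymFrom i (c j)) ∧
        P = ∑ j : Fin (n - i), c j * MvPolynomial.X (⟨i, by omega⟩ : Fin n) ^ (j : ℕ)) ∧
    (∀ c : Fin (n - i) → R n, (∀ j, SymFrom i (c j)) →
      ∑ j : Fin (n - i), c j * MvPolynomial.X (⟨i, by omega⟩ : Fin n) ^ (j : ℕ) = 0 →
      ∀ j, c j = 0) ∧
    (∀ j m : ℕ, j ≤ n - i - 1 → m ≤ n - i - 1 →
      applyWord D ((List.range (n - 1 - i)).reverse.map (· + i))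
          (MvPolynomial.X (⟨i, by omega⟩ : Fin n) ^ j * eOn (varsFrom n (i + 1)) m)
        = if j + m = n - i - 1 then MvPolynomial.C ((-1 : ℤ) ^ j) else 0) := by
  have hi' : i < n := by omega
  refine ⟨fun P hP => applyWord_demazureWord_mem_symSubring hD hi' hP,
    fun P hP => exists_sum_mul_X_pow hi' hP,
    fun c hc h => congrFun (eq_zero_of_sum_mul_X_pow_eq_zero hi' hc h),
    fun j m hj _ => ?_⟩
  rw [← demazureWord, applyWord_demazureWord_X_pow_mul_eOn hD (n - i - 1) (by omega) hj]
  simp
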